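/- arXiv:1309.1545 — 2 statements merged into one kernel-verified Lean document; each statement's English description precedes it below -/
import Mathlib

section
/- Let h ≥ p ≥ 1 and m ≥ 2 be integers. Then λ_{h,p,p}(T_{m,3}) = λ*_{h,p,p}(T_{m,3}) = max{h + (2m − 1)·p, (2m + 1)·p}. -/
open SimpleGraph

/-- An `L(h,p,p)`-labelling of `G` with span `ℓ`: labels in `{0,…,ℓ}`, labels of vertices at
distance 1 differ by at least `h`, labels of vertices at distance 2 or 3 differ by at least `p`. -/
def IsLLabelling {V : Type} (G : SimpleGraph V) (h p ℓ : ℕ) (f : V → ℕ) : Prop :=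
  (∀ v, f v ≤ ℓ) ∧
  (∀ u v, G.dist u v = 1 → (h : ℤ) ≤ |(f u : ℤ) - (f v : ℤ)|) ∧
  (∀ u v, G.dist u v = 2 ∨ G.dist u v = 3 → (p : ℤ) ≤ |(f u : ℤ) - (f v : ℤ)|)

/-- `λ_{h,p,p}(G)`: the minimum span of an `L(h,p,p)`-labelling of `G`. -/
noncomputable def lambdaNum {V : Type} (G : SimpleGraph V) (h p : ℕ) : ℕ :=
  sInf {ℓ : ℕ | ∃ f : V → ℕ, IsLLabelling G h p ℓ f}

/-- A circular interval modulo `n`: a set of residues of the form `{a, a+1, …, a+s}` mod `n`. -/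
def IsCircInterval (n : ℕ) (I : Set (ZMod n)) : Prop :=
  ∃ (a : ZMod n) (s : ℕ), I = {x : ZMod n | ∃ i : ℕ, i ≤ s ∧ x = a + (i : ZMod n)}

/-- An elegant `L(h,p,p)`-labelling: additionally each vertex `u` has a circular interval `I u`
modulo `ℓ+1` containing the labels of all neighbours of `u`, with `I u ∩ I v = ∅` for edges `uv`. -/
def IsElegantLLabelling {V : Type} (G : SimpleGraph V) (h p ℓ : ℕ) (f : V → ℕ) : Prop :=
  IsLLabelling G h p ℓ f ∧
  ∃ I : V → Set (ZMod (ℓ + 1)),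
    (∀ u, IsCircInterval (ℓ + 1) (I u)) ∧
    (∀ u w, G.Adj u w → ((f w : ZMod (ℓ + 1)) ∈ I u)) ∧
    (∀ u v, G.Adj u v → I u ∩ I v = ∅)

/-- `λ*_{h,p,p}(G)`: the minimum span of an elegant `L(h,p,p)`-labelling of `G`. -/
noncomputable def lambdaStar {V : Type} (G : SimpleGraph V) (h p : ℕ) : ℕ :=
  sInf {ℓ : ℕ | ∃ f : V → ℕ, IsElegantLLabelling G h p ℓ f}

/-- The `ℓ`-cyclic distance between labels `a` and `b`. -/
def cycDist (ℓ a b : ℕ) : ℤ :=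
  min |(a : ℤ) - (b : ℤ)| ((ℓ : ℤ) - |(a : ℤ) - (b : ℤ)|)

/-- A `C(h,p,p)`-labelling of `G` with span `ℓ`: labels in `{0,…,ℓ-1}`, and the `ℓ`-cyclic distance
between labels of vertices at distance 1 (resp. 2 or 3) is at least `h` (resp. `p`). -/
def IsCLabelling {V : Type} (G : SimpleGraph V) (h p ℓ : ℕ) (f : V → ℕ) : Prop :=
  (∀ v, f v < ℓ) ∧
  (∀ u v, G.dist u v = 1 → (h : ℤ) ≤ cycDist ℓ (f u) (f v)) ∧
  (∀ u v, G.dist u v = 2 ∨ G.dist u v = 3 → (p : ℤ) ≤ cycDist ℓ (f u) (f v))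

/-- `σ_{h,p,p}(G)`: the minimum positive `ℓ` such that `G` has a `C(h,p,p)`-labelling of span `ℓ`. -/
noncomputable def sigmaNum {V : Type} (G : SimpleGraph V) (h p : ℕ) : ℕ :=
  sInf {ℓ : ℕ | 0 < ℓ ∧ ∃ f : V → ℕ, IsCLabelling G h p ℓ f}

/-- An elegant `C(h,p,p)`-labelling: additionally each vertex `u` has a circular interval `I u`
modulo `ℓ` containing the labels of all neighbours of `u`, with `I u ∩ I v = ∅` for edges `uv`. -/
def IsElegantCLabelling {V : Type} (G : SimpleGraph V) (h p ℓ : ℕ) (f : V → ℕ) : Prop :=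
  IsCLabelling G h p ℓ f ∧
  ∃ I : V → Set (ZMod ℓ),
    (∀ u, IsCircInterval ℓ (I u)) ∧
    (∀ u w, G.Adj u w → ((f w : ZMod ℓ) ∈ I u)) ∧
    (∀ u v, G.Adj u v → I u ∩ I v = ∅)

/-- `σ*_{h,p,p}(G)`: the minimum positive `ℓ` such that `G` has an elegant `C(h,p,p)`-labelling
of span `ℓ`. -/
noncomputable def sigmaStar {V : Type} (G : SimpleGraph V) (h p : ℕ) : ℕ :=
  sInf {ℓ : ℕ | 0 < ℓ ∧ ∃ f : V → ℕ, IsElegantCLabelling G h p ℓ f}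

/-- `Δ₂(G) = max over edges uv of (deg u + deg v)`. -/
noncomputable def deltaTwo {V : Type} (G : SimpleGraph V) [Fintype V] [DecidableRel G.Adj] : ℕ :=
  sSup {d : ℕ | ∃ u v : V, G.Adj u v ∧ d = G.degree u + G.degree v}

open scoped Classical


private lemma absk (a b k : ℕ) (hk : b + k ≤ a ∨ a + k ≤ b) : (k:ℤ) ≤ |(a:ℤ) - (b:ℤ)| :=
  le_abs.mpr (by omega)

private lemma chain_lemma {V : Type} [DecidableEq V] {p : ℤ} (hp : 0 < p) :
    ∀ (s : Finset V) (F : V → ℤ) (lo hi : ℤ), s.Nonempty →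
      (∀ v ∈ s, lo ≤ F v ∧ F v ≤ hi) →
      (∀ u ∈ s, ∀ v ∈ s, u ≠ v → p ≤ |F u - F v|) →
      ((s.card : ℤ) - 1) * p ≤ hi - lo := by
  intro s
  induction s using Finset.strongInduction with
  | _ s ih =>
    intro F lo hi hne hbd hsep
    obtain ⟨u, hu, hmin⟩ := s.exists_min_image F hne
    rcases (s.erase u).eq_empty_or_nonempty with he | hne'
    · have h1 : s.card = 1 := by
        have h2 := Finset.card_erase_of_mem hu
        have h3 : 1 ≤ s.card := Finset.card_pos.mpr hne
        rw [he] at h2; simp at h2; omega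
      have := hbd u hu
      rw [h1]; simp; linarith
    · have hsub : s.erase u ⊂ s := Finset.erase_ssubset hu
      have key := ih _ hsub F (lo + p) hi hne' ?_ ?_
      · have hc : (s.erase u).card = s.card - 1 := Finset.card_erase_of_mem hu
        have hcard1 : 1 ≤ s.card := Finset.card_pos.mpr hne
        rw [hc] at key
        have : ((s.card - 1 : ℕ) : ℤ) = (s.card : ℤ) - 1 := by push_cast [hcard1]; ring
        rw [this] at key; linarith
      · intro v hv
        have hvs := Finset.mem_of_mem_erase hv
        refine ⟨?_, (hbd v hvs).2⟩
        have h1 := hmin v hvs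
        have h2 := hsep u hu v hvs (fun hh => (Finset.ne_of_mem_erase hv hh.symm))
        have h3 := (hbd u hu).1
        rw [abs_sub_comm] at h2
        have : p ≤ F v - F u := by
          rcases abs_cases (F v - F u) with ⟨hh, _⟩ | ⟨hh, _⟩ <;> omega
        linarith
      · intro a ha b hb hab
        exact hsep a (Finset.mem_of_mem_erase ha) b (Finset.mem_of_mem_erase hb) hab

section TreeAux
variable {V : Type} [DecidableEq V] {G : SimpleGraph V}

lemma tree_dist_of_isPath (hT : G.IsTree) {u v : V} (w : G.Walk u v) (hw : w.IsPath) :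
    G.dist u v = w.length := by
  obtain ⟨q, hq, hql⟩ := hT.isConnected.exists_path_of_dist u v
  have hun := isAcyclic_iff_path_unique.mp hT.IsAcyclic (⟨w, hw⟩ : G.Path u v) ⟨q, hq⟩
  have : w = q := congrArg Subtype.val hun
  rw [← hql, this]


-- dist from r to any support vertex is at most the walk length
lemma dist_le_of_mem_support {r v x : V} (w : G.Walk r v) (hx : x ∈ w.support) :
    G.dist r x ≤ w.length :=
  le_trans (dist_le (w.takeUntil x hx)) (Walk.length_takeUntil_le w hx)

/-- adjacent vertices have dist-from-r differing by exactly one -/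
lemma adj_dist_root (hT : G.IsTree) (r : V) {u v : V} (hadj : G.Adj u v) :
    G.dist r v = G.dist r u + 1 ∨ G.dist r u = G.dist r v + 1 := by
  have hconn := hT.isConnected
  have key : ∀ a b : V, G.Adj a b → G.dist r a ≠ G.dist r b := by
    intro a b hab heq
    obtain ⟨P, hP, hPl⟩ := hconn.exists_path_of_dist r a
    have hbs : b ∉ P.support := by
      intro hmem
      have h3 : G.dist r b ≤ (P.takeUntil b hmem).length := dist_le _
      have h4 : G.dist b a ≤ (P.dropUntil b hmem).length := dist_le _
      have h5 : (P.takeUntil b hmem).length + (P.dropUntil b hmem).length = P.length := by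
        rw [← Walk.length_append, P.take_spec hmem]
      have hba : G.dist b a = 1 := dist_eq_one_iff_adj.mpr hab.symm
      omega
    have hQ : (P.concat hab).IsPath := by
      rw [← Walk.isPath_reverse_iff, Walk.reverse_concat]
      rw [Walk.cons_isPath_iff]
      refine ⟨hP.reverse, ?_⟩
      rw [Walk.support_reverse, List.mem_reverse]
      exact hbs
    have := tree_dist_of_isPath hT _ hQ
    rw [Walk.length_concat, hPl] at this
    omega
  have h1 : G.dist r v ≤ G.dist r u + 1 := by
    have := hconn.dist_triangle (u := r) (v := u) (w := v)
    rwa [dist_eq_one_iff_adj.mpr hadj] at this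
  have h2 : G.dist r u ≤ G.dist r v + 1 := by
    have := hconn.dist_triangle (u := r) (v := v) (w := u)
    rwa [dist_eq_one_iff_adj.mpr hadj.symm] at this
  have := key u v hadj
  omega

/-- uniqueness of the lower neighbour in a tree -/
lemma lower_unique (hT : G.IsTree) (r : V) {v z z' : V}
    (hz : G.Adj z v) (hz' : G.Adj z' v)
    (hdz : G.dist r z + 1 = G.dist r v) (hdz' : G.dist r z' + 1 = G.dist r v) : z = z' := by
  have hconn := hT.isConnected
  obtain ⟨P, hP, hPl⟩ := hconn.exists_path_of_dist r z
  obtain ⟨P', hP', hPl'⟩ := hconn.exists_path_of_dist r z'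
  have hvP : v ∉ P.support := by
    intro hmem
    have := dist_le_of_mem_support P hmem
    omega
  have hvP' : v ∉ P'.support := by
    intro hmem
    have := dist_le_of_mem_support P' hmem
    omega
  have hQ : (P.concat hz).IsPath := by
    rw [← Walk.isPath_reverse_iff, Walk.reverse_concat, Walk.cons_isPath_iff]
    exact ⟨hP.reverse, by rw [Walk.support_reverse, List.mem_reverse]; exact hvP⟩
  have hQ' : (P'.concat hz').IsPath := by
    rw [← Walk.isPath_reverse_iff, Walk.reverse_concat, Walk.cons_isPath_iff]
    exact ⟨hP'.reverse, by rw [Walk.support_reverse, List.mem_reverse]; exact hvP'⟩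
  have hun := isAcyclic_iff_path_unique.mp hT.IsAcyclic (⟨P.concat hz, hQ⟩ : G.Path r v) ⟨P'.concat hz', hQ'⟩
  have heq : P.concat hz = P'.concat hz' := congrArg Subtype.val hun
  obtain ⟨hv, -⟩ := Walk.concat_inj heq
  exact hv

/-- existence of a parent -/
lemma exists_parent (hconn : G.Connected) {r v : V} (hv : G.dist r v ≠ 0) :
    ∃ z, G.Adj v z ∧ G.dist r z + 1 = G.dist r v := by
  obtain ⟨P, hP, hPl⟩ := hconn.exists_path_of_dist r v
  cases hPr : P.reverse with
  | nil =>
      exfalso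
      have : P.length = 0 := by
        have := congrArg Walk.length hPr
        rwa [Walk.length_reverse] at this
      omega
  | cons hadj q =>
      rename_i z
      refine ⟨z, hadj, ?_⟩
      have h1 : G.dist r z ≤ q.length := by
        rw [dist_comm]; exact dist_le q
      have h2 : q.length + 1 = P.length := by
        have := congrArg Walk.length hPr
        rw [Walk.length_reverse] at this
        simp [Walk.length_cons] at this
        omega
      have h3 : G.dist r v ≤ G.dist r z + 1 := by
        have := hconn.dist_triangle (u := r) (v := z) (w := v)
        rwa [dist_eq_one_iff_adj.mpr hadj.symm] at this
      omega

lemma dist2_decomp (hconn : G.Connected) {u v : V} (h2 : G.dist u v = 2) :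
    ∃ z, G.Adj u z ∧ G.Adj z v := by
  obtain ⟨w, hw, hl⟩ := hconn.exists_path_of_dist u v
  rw [h2] at hl
  cases w with
  | nil => simp at hl
  | cons h q =>
    cases q with
    | nil => simp at hl
    | cons h' q' =>
      cases q' with
      | nil => exact ⟨_, h, h'⟩
      | cons h'' q'' => simp [Walk.length_cons] at hl

lemma dist3_decomp (hconn : G.Connected) {u v : V} (h3 : G.dist u v = 3) :
    ∃ z w, G.Adj u z ∧ G.Adj z w ∧ G.Adj w v := by
  obtain ⟨w, hw, hl⟩ := hconn.exists_path_of_dist u v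
  rw [h3] at hl
  cases w with
  | nil => simp at hl
  | cons h q =>
    cases q with
    | nil => simp at hl
    | cons h' q' =>
      cases q' with
      | nil => simp at hl
      | cons h'' q'' =>
        cases q'' with
        | nil => exact ⟨_, _, h, h', h''⟩
        | cons h3' q3 => simp [Walk.length_cons] at hl

end TreeAux

private lemma core_bound {V : Type} [DecidableEq V] (h p m ℓ : ℕ)
    (hp : 1 ≤ p) (hph : p ≤ h) (hm : 1 ≤ m)
    (x y w₀ : V) (C D : Finset V) (F : V → ℤ)
    (hCcard : C.card = m) (hDcard : D.card = m) (hdisj : Disjoint C D)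
    (hxC : x ∉ C) (hxD : x ∉ D) (hyC : y ∉ C) (hyD : y ∉ D) (hxy : x ≠ y)
    (hbd : ∀ v, v ∈ C ∪ D ∪ {x, y} → 0 ≤ F v ∧ F v ≤ (ℓ:ℤ))
    (hab : (h : ℤ) ≤ F y - F x)
    (hsep : ∀ u ∈ C ∪ D ∪ ({x, y} : Finset V), ∀ v ∈ C ∪ D ∪ ({x, y} : Finset V),
      u ≠ v → (p:ℤ) ≤ |F u - F v|)
    (hD_y : ∀ w ∈ D, (h:ℤ) ≤ |F w - F y|)
    (hmid : ∀ w ∈ C, F x < F w → F w < F y → w = w₀) :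
    ((h:ℤ) + (2*(m:ℤ) - 1) * p ≤ (ℓ:ℤ)) ∧ ((2*(m:ℤ)+1) * p ≤ (ℓ:ℤ)) := by
  have hp' : (0:ℤ) < p := by exact_mod_cast hp
  have hxS : x ∈ C ∪ D ∪ ({x, y} : Finset V) := by
    simp only [Finset.mem_union, Finset.mem_insert, Finset.mem_singleton]; tauto
  have hyS : y ∈ C ∪ D ∪ ({x, y} : Finset V) := by
    simp only [Finset.mem_union, Finset.mem_insert, Finset.mem_singleton]; tauto
  have hBS : ∀ w ∈ C ∪ D, w ∈ C ∪ D ∪ ({x, y} : Finset V) := by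
    intro w hw
    simp only [Finset.mem_union] at hw ⊢; tauto
  have hBcard : (C ∪ D).card = 2*m := by
    rw [Finset.card_union_of_disjoint hdisj, hCcard, hDcard]; ring
  have hxB : x ∉ C ∪ D := by simp only [Finset.mem_union]; tauto
  have hyB : y ∉ C ∪ D := by simp only [Finset.mem_union]; tauto
  have hScard : (C ∪ D ∪ ({x, y} : Finset V)).card = 2*m + 2 := by
    rw [Finset.card_union_of_disjoint, hBcard]
    · rw [Finset.card_insert_of_notMem (by simpa using hxy), Finset.card_singleton]
    · rw [Finset.disjoint_left]
      intro a ha hb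
      simp only [Finset.mem_insert, Finset.mem_singleton] at hb
      rcases hb with rfl | rfl
      · exact hxB ha
      · exact hyB ha
  have bound2 : (2*(m:ℤ)+1) * p ≤ (ℓ:ℤ) := by
    have := chain_lemma hp' _ F 0 ℓ ⟨x, hxS⟩ hbd hsep
    rw [hScard] at this
    push_cast at this
    linarith
  refine ⟨?_, bound2⟩
  have hsepB : ∀ u ∈ C ∪ D, ∀ v ∈ C ∪ D, u ≠ v → (p:ℤ) ≤ |F u - F v| :=
    fun u hu v hv huv => hsep u (hBS u hu) v (hBS v hv) huv
  have hwx : ∀ w ∈ C ∪ D, (p:ℤ) ≤ |F w - F x| := by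
    intro w hw
    exact hsep w (hBS w hw) x hxS (fun hh => hxB (hh ▸ hw))
  have hwy : ∀ w ∈ C ∪ D, (p:ℤ) ≤ |F w - F y| := by
    intro w hw
    exact hsep w (hBS w hw) y hyS (fun hh => hyB (hh ▸ hw))
  set t₁ : Finset V := (C ∪ D).filter (fun w => F w < F x) with ht₁
  set t₂ : Finset V := (C ∪ D).filter (fun w => F x < F w ∧ F w < F y) with ht₂
  set t₃ : Finset V := (C ∪ D).filter (fun w => F y < F w) with ht₃
  have hax : F x < F y := by
    have : (p:ℤ) ≤ h := by exact_mod_cast hph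
    linarith
  have hsplit : t₁.card + t₂.card + t₃.card = 2*m := by
    rw [← hBcard]
    have hu : t₁ ∪ t₂ ∪ t₃ = C ∪ D := by
      apply Finset.Subset.antisymm
      · intro w hw
        rcases Finset.mem_union.mp hw with hw' | hw'
        · rcases Finset.mem_union.mp hw' with hw'' | hw''
          · exact Finset.mem_of_mem_filter w hw''
          · exact Finset.mem_of_mem_filter w hw''
        · exact Finset.mem_of_mem_filter w hw'
      · intro w hw
        have h1 : F w ≠ F x := by
          intro hh
          have := hwx w hw
          rw [hh] at this; simp at this; linarith
        have h2 : F w ≠ F y := by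
          intro hh
          have := hwy w hw
          rw [hh] at this; simp at this; linarith
        rcases lt_trichotomy (F w) (F x) with hlt | heq | hgt
        · exact Finset.mem_union_left _ (Finset.mem_union_left _ (Finset.mem_filter.mpr ⟨hw, hlt⟩))
        · exact absurd heq h1
        · rcases lt_trichotomy (F w) (F y) with hlt' | heq' | hgt'
          · exact Finset.mem_union_left _ (Finset.mem_union_right _ (Finset.mem_filter.mpr ⟨hw, hgt, hlt'⟩))
          · exact absurd heq' h2
          · exact Finset.mem_union_right _ (Finset.mem_filter.mpr ⟨hw, hgt'⟩)
    have d12 : Disjoint t₁ t₂ := by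
      rw [Finset.disjoint_left]; intro a ha hb
      simp only [ht₁, ht₂, Finset.mem_filter] at ha hb; linarith [ha.2, hb.2.1]
    have d13 : Disjoint t₁ t₃ := by
      rw [Finset.disjoint_left]; intro a ha hb
      simp only [ht₁, ht₃, Finset.mem_filter] at ha hb; linarith [ha.2, hb.2]
    have d23 : Disjoint t₂ t₃ := by
      rw [Finset.disjoint_left]; intro a ha hb
      simp only [ht₂, ht₃, Finset.mem_filter] at ha hb; linarith [ha.2.2, hb.2]
    rw [← hu, Finset.card_union_of_disjoint, Finset.card_union_of_disjoint d12]
    exact Finset.disjoint_union_left.mpr ⟨d13, d23⟩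
  have hlow : (t₁.card : ℤ) * p ≤ F x := by
    rcases t₁.eq_empty_or_nonempty with he | hne
    · rw [he]; simpa using (hbd x hxS).1
    · have := chain_lemma hp' t₁ F 0 (F x - p) hne ?_ ?_
      · linarith
      · intro v hv
        rw [ht₁, Finset.mem_filter] at hv
        refine ⟨(hbd v (hBS v hv.1)).1, ?_⟩
        have hs := hwx v hv.1
        rcases abs_cases (F v - F x) with ⟨hh, _⟩ | ⟨hh, _⟩ <;> linarith [hv.2]
      · intro a ha b hb hab'
        exact hsepB a (Finset.mem_of_mem_filter a ha) b (Finset.mem_of_mem_filter b hb) hab'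
  have hhigh : F y + (t₃.card : ℤ) * p ≤ ℓ := by
    rcases t₃.eq_empty_or_nonempty with he | hne
    · rw [he]; simpa using (hbd y hyS).2
    · have := chain_lemma hp' t₃ F (F y + p) ℓ hne ?_ ?_
      · linarith
      · intro v hv
        rw [ht₃, Finset.mem_filter] at hv
        refine ⟨?_, (hbd v (hBS v hv.1)).2⟩
        have hs := hwy v hv.1
        rcases abs_cases (F v - F y) with ⟨hh, _⟩ | ⟨hh, _⟩ <;> linarith [hv.2]
      · intro a ha b hb hab'
        exact hsepB a (Finset.mem_of_mem_filter a ha) b (Finset.mem_of_mem_filter b hb) hab'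
  have hmid2 : (h:ℤ) + ((t₂.card : ℤ) - 1) * p ≤ F y - F x := by
    set t₂D : Finset V := t₂.filter (fun w => w ∈ D) with ht₂D
    have hcard2 : t₂.card ≤ t₂D.card + 1 := by
      have hsub : t₂ ⊆ t₂D ∪ {w₀} := by
        intro w hw
        by_cases hwD : w ∈ D
        · exact Finset.mem_union_left _ (by rw [ht₂D, Finset.mem_filter]; exact ⟨hw, hwD⟩)
        · have hwB := Finset.mem_of_mem_filter w hw
          have hwC : w ∈ C := by
            rw [Finset.mem_union] at hwB; tauto
          rw [ht₂, Finset.mem_filter] at hw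
          have := hmid w hwC hw.2.1 hw.2.2
          subst this
          exact Finset.mem_union_right _ (by simp)
      calc t₂.card ≤ (t₂D ∪ {w₀}).card := Finset.card_le_card hsub
        _ ≤ t₂D.card + 1 := le_trans (Finset.card_union_le _ _) (by simp)
    rcases t₂D.eq_empty_or_nonempty with he | hne
    · have h1 : t₂.card ≤ 1 := by rw [he] at hcard2; simpa using hcard2
      have h1' : (t₂.card : ℤ) ≤ 1 := by exact_mod_cast h1
      have hc : ((t₂.card : ℤ) - 1) * p ≤ 0 :=
        mul_nonpos_of_nonpos_of_nonneg (by linarith) (by linarith)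
      linarith
    · have hch := chain_lemma hp' t₂D F (F x + p) (F y - h) hne ?_ ?_
      · have hle : (t₂.card : ℤ) ≤ (t₂D.card : ℤ) + 1 := by exact_mod_cast hcard2
        have hmul : ((t₂.card : ℤ) - 1) * p ≤ (t₂D.card : ℤ) * p :=
          mul_le_mul_of_nonneg_right (by linarith) (le_of_lt hp')
        linarith
      · intro v hv
        rw [ht₂D, Finset.mem_filter] at hv
        obtain ⟨hv2, hvD⟩ := hv
        rw [ht₂, Finset.mem_filter] at hv2
        obtain ⟨hvB, hv2a, hv2b⟩ := hv2
        constructor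
        · have hs := hwx v hvB
          rcases abs_cases (F v - F x) with ⟨hh, _⟩ | ⟨hh, _⟩ <;> linarith
        · have hs := hD_y v hvD
          rcases abs_cases (F v - F y) with ⟨hh, _⟩ | ⟨hh, _⟩ <;> linarith
      · intro a ha b hb hab'
        have ha' := Finset.mem_of_mem_filter a (Finset.mem_of_mem_filter a ha)
        have hb' := Finset.mem_of_mem_filter b (Finset.mem_of_mem_filter b hb)
        exact hsepB a ha' b hb' hab'
  have hsum : (t₁.card : ℤ) + t₂.card + t₃.card = 2*(m:ℤ) := by exact_mod_cast hsplit
  have hprod : (t₁.card:ℤ)*p + (t₂.card:ℤ)*p + (t₃.card:ℤ)*p = 2*(m:ℤ)*p := by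
    linear_combination hsum * (p:ℤ)
  linarith [hlow, hmid2, hhigh, hprod]

noncomputable def idxIn {V : Type} (s : Finset V) (v : V) : ℕ :=
  if h : v ∈ s then ((s : Finset V).equivFin ⟨v, h⟩ : Fin _).val else 0

lemma idxIn_lt {V : Type} (s : Finset V) (v : V) (hv : v ∈ s) : idxIn s v < s.card := by
  rw [idxIn, dif_pos hv]
  exact (s.equivFin ⟨v, hv⟩).isLt

lemma idxIn_inj {V : Type} (s : Finset V) (u v : V) (hu : u ∈ s) (hv : v ∈ s)
    (huv : idxIn s u = idxIn s v) : u = v := by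
  unfold idxIn at huv
  rw [dif_pos hu, dif_pos hv] at huv
  have := s.equivFin.injective (Fin.ext huv)
  exact Subtype.ext_iff.mp this

noncomputable def par {V : Type} (G : SimpleGraph V) (r : V) (v : V) : V :=
  if h : ∃ z, G.Adj v z ∧ G.dist r z + 1 = G.dist r v then h.choose else v

lemma par_spec {V : Type} {G : SimpleGraph V} {r v : V}
    (h : ∃ z, G.Adj v z ∧ G.dist r z + 1 = G.dist r v) :
    G.Adj v (par G r v) ∧ G.dist r (par G r v) + 1 = G.dist r v := by
  rw [par, dif_pos h]
  exact h.choose_spec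

noncomputable def slotIdx {V : Type} [Fintype V] [DecidableEq V] (G : SimpleGraph V)
    [DecidableRel G.Adj] (r v : V) : ℕ :=
  if idxIn ((G.neighborFinset (par G r v)).erase (par G r (par G r v))) v
      < idxIn (G.neighborFinset r) (par G r (par G r v))
  then idxIn ((G.neighborFinset (par G r v)).erase (par G r (par G r v))) v
  else idxIn ((G.neighborFinset (par G r v)).erase (par G r (par G r v))) v + 1

lemma slotIdx_ne {V : Type} [Fintype V] [DecidableEq V] (G : SimpleGraph V)
    [DecidableRel G.Adj] (r v : V) :
    slotIdx G r v ≠ idxIn (G.neighborFinset r) (par G r (par G r v)) := by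
  unfold slotIdx; split <;> omega

lemma slotIdx_le {V : Type} [Fintype V] [DecidableEq V] (G : SimpleGraph V)
    [DecidableRel G.Adj] (r v : V) {m : ℕ}
    (hk : idxIn ((G.neighborFinset (par G r v)).erase (par G r (par G r v))) v < m) :
    slotIdx G r v ≤ m := by
  unfold slotIdx; split <;> omega

lemma slotIdx_inj {V : Type} [Fintype V] [DecidableEq V] (G : SimpleGraph V)
    [DecidableRel G.Adj] (r u v : V) (hpu : par G r u = par G r v)
    (heq : slotIdx G r u = slotIdx G r v) :
    idxIn ((G.neighborFinset (par G r v)).erase (par G r (par G r v))) u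
      = idxIn ((G.neighborFinset (par G r v)).erase (par G r (par G r v))) v := by
  unfold slotIdx at heq
  rw [hpu] at heq
  split at heq <;> split at heq <;> omega

noncomputable def labl {V : Type} [Fintype V] [DecidableEq V] (G : SimpleGraph V)
    [DecidableRel G.Adj] (r : V) (m h p : ℕ) (v : V) : ℕ :=
  if G.dist r v = 0 then (m-1)*p + max h (2*p)
  else if G.dist r v = 1 then idxIn (G.neighborFinset r) v * p
  else if G.dist r v = 2 then
    ((m-1)*p + max h (2*p)) + (idxIn ((G.neighborFinset (par G r v)).erase r) v + 1) * p
  else slotIdx G r v * p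

def ival (n : ℕ) (a s : ℕ) : Set (ZMod n) :=
  {x : ZMod n | ∃ i : ℕ, i ≤ s ∧ x = (a : ZMod n) + (i : ZMod n)}

lemma ival_circ (n : ℕ) (a s : ℕ) : IsCircInterval n (ival n a s) := ⟨(a : ZMod n), s, rfl⟩

lemma mem_ival {n a s : ℕ} (b : ℕ) (h1 : a ≤ b) (h2 : b ≤ a + s) :
    ((b : ℕ) : ZMod n) ∈ ival n a s := by
  refine ⟨b - a, by omega, ?_⟩
  rw [← Nat.cast_add]
  congr 1
  omega

lemma ival_inter_empty {n a s a' s' : ℕ} (hn : n ≠ 0) (h1 : a + s < a') (h2 : a' + s' < n) :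
    ival n a s ∩ ival n a' s' = ∅ := by
  haveI : NeZero n := ⟨hn⟩
  apply Set.eq_empty_iff_forall_notMem.mpr
  rintro x ⟨⟨i, hi, rfl⟩, ⟨i', hi', hx⟩⟩
  have e1 : ((a + i : ℕ) : ZMod n) = ((a' + i' : ℕ) : ZMod n) := by
    push_cast
    exact hx
  have e2 := congrArg ZMod.val e1
  rw [ZMod.val_natCast_of_lt (by omega), ZMod.val_natCast_of_lt (by omega)] at e2
  omega

lemma construction {V : Type} [Fintype V] [DecidableEq V] (G : SimpleGraph V) [DecidableRel G.Adj]
    (hT : G.IsTree) (m : ℕ) (hm : 2 ≤ m) (r : V)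
    (hr : G.degree r = m)
    (hdeg : ∀ v : V, G.dist r v = 1 ∨ G.dist r v = 2 → G.degree v = m + 1)
    (hball : ∀ v : V, G.dist r v ≤ 3)
    (h p : ℕ) (hp : 1 ≤ p) (hph : p ≤ h) :
    IsElegantLLabelling G h p (max h (2*p) + (2*m-1)*p) (labl G r m h p) := by
  have hconn := hT.isConnected
  have hHh : h ≤ max h (2*p) := le_max_left _ _
  have hH2p : 2*p ≤ max h (2*p) := le_max_right _ _
  have hd_rr : G.dist r r = 0 := by simp
  have hd0 : ∀ v : V, G.dist r v = 0 → v = r := by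
    intro v hv
    by_contra hne
    have := hconn.pos_dist_of_ne (fun hh => hne hh.symm : r ≠ v)
    omega
  -- parent facts
  have hpar : ∀ v : V, G.dist r v ≠ 0 →
      G.Adj v (par G r v) ∧ G.dist r (par G r v) + 1 = G.dist r v := by
    intro v hv
    exact par_spec (exists_parent hconn hv)
  have hparu : ∀ v z : V, G.Adj z v → G.dist r z + 1 = G.dist r v → z = par G r v := by
    intro v z hz hdz
    have hv0 : G.dist r v ≠ 0 := by omega
    obtain ⟨h1, h2⟩ := hpar v hv0
    exact lower_unique hT r hz h1.symm hdz h2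
  -- cardinalities
  have hNr_card : (G.neighborFinset r).card = m := by
    rw [card_neighborFinset_eq_degree]; exact hr
  -- depth-1 vertices
  have hd1mem : ∀ v : V, G.dist r v = 1 → v ∈ G.neighborFinset r := by
    intro v hv
    rw [mem_neighborFinset]
    exact dist_eq_one_iff_adj.mp hv
  have hidx1 : ∀ v : V, G.dist r v = 1 → idxIn (G.neighborFinset r) v < m := by
    intro v hv
    have := idxIn_lt _ v (hd1mem v hv)
    omega
  -- depth-2 vertices
  have hd2par : ∀ v : V, G.dist r v = 2 → G.dist r (par G r v) = 1 := by
    intro v hv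
    have := (hpar v (by omega)).2
    omega
  have hd2mem : ∀ v : V, G.dist r v = 2 → v ∈ (G.neighborFinset (par G r v)).erase r := by
    intro v hv
    rw [Finset.mem_erase, mem_neighborFinset]
    constructor
    · intro hh
      rw [hh] at hv
      omega
    · exact (hpar v (by omega)).1.symm
  have hd2card : ∀ v : V, G.dist r v = 2 →
      ((G.neighborFinset (par G r v)).erase r).card = m := by
    intro v hv
    have h1 : r ∈ G.neighborFinset (par G r v) := by
      rw [mem_neighborFinset]
      exact (dist_eq_one_iff_adj.mp (hd2par v hv)).symm
    rw [Finset.card_erase_of_mem h1, card_neighborFinset_eq_degree,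
      hdeg _ (Or.inl (hd2par v hv))]
    omega
  have hidx2 : ∀ v : V, G.dist r v = 2 →
      idxIn ((G.neighborFinset (par G r v)).erase r) v < m := by
    intro v hv
    have := idxIn_lt _ v (hd2mem v hv)
    rw [hd2card v hv] at this
    exact this
  -- depth-3 vertices
  have hd3par : ∀ v : V, G.dist r v = 3 → G.dist r (par G r v) = 2 := by
    intro v hv
    have := (hpar v (by omega)).2
    omega
  have hd3mem : ∀ v : V, G.dist r v = 3 →
      v ∈ (G.neighborFinset (par G r v)).erase (par G r (par G r v)) := by
    intro v hv
    rw [Finset.mem_erase, mem_neighborFinset]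
    constructor
    · intro hh
      have := hd2par (par G r v) (hd3par v hv)
      rw [← hh] at this
      omega
    · exact (hpar v (by omega)).1.symm
  have hd3card : ∀ v : V, G.dist r v = 3 →
      ((G.neighborFinset (par G r v)).erase (par G r (par G r v))).card = m := by
    intro v hv
    have h2 : G.dist r (par G r v) = 2 := hd3par v hv
    have h1 : par G r (par G r v) ∈ G.neighborFinset (par G r v) := by
      rw [mem_neighborFinset]
      exact (hpar (par G r v) (by omega)).1
    rw [Finset.card_erase_of_mem h1, card_neighborFinset_eq_degree, hdeg _ (Or.inr h2)]
    omega
  have hidx3 : ∀ v : V, G.dist r v = 3 →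
      idxIn ((G.neighborFinset (par G r v)).erase (par G r (par G r v))) v < m := by
    intro v hv
    have := idxIn_lt _ v (hd3mem v hv)
    rw [hd3card v hv] at this
    exact this
  -- label formulas
  have hf0 : ∀ v : V, G.dist r v = 0 → labl G r m h p v = (m-1)*p + max h (2*p) := by
    intro v hv
    rw [labl, if_pos hv]
  have hf1 : ∀ v : V, G.dist r v = 1 →
      labl G r m h p v = idxIn (G.neighborFinset r) v * p := by
    intro v hv
    rw [labl, if_neg (by omega), if_pos hv]
  have hf2 : ∀ v : V, G.dist r v = 2 → labl G r m h p v =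
      ((m-1)*p + max h (2*p)) + (idxIn ((G.neighborFinset (par G r v)).erase r) v + 1) * p := by
    intro v hv
    rw [labl, if_neg (by omega), if_neg (by omega), if_pos hv]
  have hf3 : ∀ v : V, G.dist r v = 3 → labl G r m h p v = slotIdx G r v * p := by
    intro v hv
    rw [labl, if_neg (by omega), if_neg (by omega), if_neg (by omega)]
  have hslot_le : ∀ v : V, G.dist r v = 3 → slotIdx G r v ≤ m := by
    intro v hv
    exact slotIdx_le G r v (hidx3 v hv)
  have hslot_ne : ∀ v : V, G.dist r v = 3 →
      slotIdx G r v ≠ idxIn (G.neighborFinset r) (par G r (par G r v)) :=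
    fun v _ => slotIdx_ne G r v
  have hslot_inj : ∀ u v : V, G.dist r u = 3 → G.dist r v = 3 → par G r u = par G r v →
      slotIdx G r u = slotIdx G r v → u = v := by
    intro u v hu hv hpu heq
    have := slotIdx_inj G r u v hpu heq
    have humem := hd3mem u hu
    rw [hpu] at humem
    exact idxIn_inj _ u v humem (hd3mem v hv) this
  -- arithmetic helpers
  have hppos : 0 < p := hp
  have hmp : (m-1)*p + p = m*p := by
    have h1 : (m-1)+1 = m := by omega
    calc (m-1)*p + p = ((m-1)+1)*p := by ring
      _ = m*p := by rw [h1]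
  have hM_eq : ((m-1)*p + max h (2*p)) + m*p = max h (2*p) + (2*m-1)*p := by
    have h1 : (m-1) + m = 2*m-1 := by omega
    calc ((m-1)*p + max h (2*p)) + m*p = ((m-1)+m)*p + max h (2*p) := by ring
      _ = (2*m-1)*p + max h (2*p) := by rw [h1]
      _ = max h (2*p) + (2*m-1)*p := by ring
  have idx_gap : ∀ i i' : ℕ, i ≠ i' → (p:ℤ) ≤ |((i*p : ℕ):ℤ) - ((i'*p : ℕ):ℤ)| := by
    intro i i' hii
    apply absk
    rcases Nat.lt_or_ge i i' with hh | hh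
    · right
      have h2 := Nat.mul_le_mul_right p (show i+1 ≤ i' from hh)
      have h3 : (i+1)*p = i*p + p := by ring
      omega
    · left
      have hh' : i' + 1 ≤ i := by omega
      have h2 := Nat.mul_le_mul_right p hh'
      have h3 : (i'+1)*p = i'*p + p := by ring
      omega
  have idx_gap2 : ∀ (A : ℕ), ∀ i i' : ℕ, i ≠ i' →
      (p:ℤ) ≤ |((A + i*p : ℕ):ℤ) - ((A + i'*p : ℕ):ℤ)| := by
    intro A i i' hii
    apply absk
    rcases Nat.lt_or_ge i i' with hh | hh
    · right
      have h2 := Nat.mul_le_mul_right p (show i+1 ≤ i' from hh)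
      have h3 : (i+1)*p = i*p + p := by ring
      omega
    · left
      have hh' : i' + 1 ≤ i := by omega
      have h2 := Nat.mul_le_mul_right p hh'
      have h3 : (i'+1)*p = i'*p + p := by ring
      omega
  -- label bound
  have hlab_le : ∀ v : V, labl G r m h p v ≤ max h (2*p) + (2*m-1)*p := by
    intro v
    have hd := hball v
    rcases (by omega : G.dist r v = 0 ∨ G.dist r v = 1 ∨ G.dist r v = 2 ∨ G.dist r v = 3)
      with h'|h'|h'|h'
    · rw [hf0 v h']
      have h2 := Nat.mul_le_mul_right p (show m-1 ≤ 2*m-1 by omega)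
      linarith
    · rw [hf1 v h']
      have h2 := Nat.mul_le_mul_right p (show idxIn (G.neighborFinset r) v ≤ 2*m-1 by
        have := hidx1 v h'; omega)
      linarith
    · rw [hf2 v h']
      have h2 := Nat.mul_le_mul_right p
        (show idxIn ((G.neighborFinset (par G r v)).erase r) v + 1 ≤ m by
          have := hidx2 v h'; omega)
      linarith [hM_eq]
    · rw [hf3 v h']
      have h2 := Nat.mul_le_mul_right p (show slotIdx G r v ≤ 2*m-1 by
        have := hslot_le v h'; omega)
      linarith
  -- adjacent gap
  have gap_h : ∀ u v : V, G.Adj u v → G.dist r u + 1 = G.dist r v →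
      (h:ℤ) ≤ |(labl G r m h p u : ℤ) - (labl G r m h p v : ℤ)| := by
    intro u v hadj hd
    have hdu := hball u
    have hdv := hball v
    rcases (by omega : G.dist r u = 0 ∨ G.dist r u = 1 ∨ G.dist r u = 2) with h'|h'|h'
    · have hv1 : G.dist r v = 1 := by omega
      rw [hf0 u h', hf1 v hv1]
      apply absk
      left
      have hb := Nat.mul_le_mul_right p (show idxIn (G.neighborFinset r) v ≤ m-1 by
        have := hidx1 v hv1; omega)
      linarith
    · have hv2 : G.dist r v = 2 := by omega
      rw [hf1 u h', hf2 v hv2]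
      apply absk
      right
      have hb := Nat.mul_le_mul_right p (show idxIn (G.neighborFinset r) u ≤ m-1 by
        have := hidx1 u h'; omega)
      have hb2 : 0 ≤ (idxIn ((G.neighborFinset (par G r v)).erase r) v + 1) * p := Nat.zero_le _
      linarith
    · have hv3 : G.dist r v = 3 := by omega
      rw [hf2 u h', hf3 v hv3]
      apply absk
      left
      have hb := Nat.mul_le_mul_right p (hslot_le v hv3)
      have hb2 : p ≤ (idxIn ((G.neighborFinset (par G r u)).erase r) u + 1) * p :=
        Nat.le_mul_of_pos_left p (Nat.succ_pos _)
      linarith [hmp]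
  -- p-gap for odd depth differences
  have gap_p : ∀ u v : V, (G.dist r u + 1 = G.dist r v ∨ G.dist r u + 3 = G.dist r v) →
      (p:ℤ) ≤ |(labl G r m h p u : ℤ) - (labl G r m h p v : ℤ)| := by
    intro u v hd
    have hdu := hball u
    have hdv := hball v
    rcases (by omega : (G.dist r u = 0 ∧ G.dist r v = 1) ∨ (G.dist r u = 1 ∧ G.dist r v = 2)
      ∨ (G.dist r u = 2 ∧ G.dist r v = 3) ∨ (G.dist r u = 0 ∧ G.dist r v = 3))
      with ⟨h1, h2⟩|⟨h1, h2⟩|⟨h1, h2⟩|⟨h1, h2⟩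
    · rw [hf0 u h1, hf1 v h2]
      apply absk
      left
      have hb := Nat.mul_le_mul_right p (show idxIn (G.neighborFinset r) v ≤ m-1 by
        have := hidx1 v h2; omega)
      linarith
    · rw [hf1 u h1, hf2 v h2]
      apply absk
      right
      have hb := Nat.mul_le_mul_right p (show idxIn (G.neighborFinset r) u ≤ m-1 by
        have := hidx1 u h1; omega)
      have hb2 : 0 ≤ (idxIn ((G.neighborFinset (par G r v)).erase r) v + 1) * p := Nat.zero_le _
      linarith
    · rw [hf2 u h1, hf3 v h2]
      apply absk
      left
      have hb := Nat.mul_le_mul_right p (hslot_le v h2)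
      have hb2 : p ≤ (idxIn ((G.neighborFinset (par G r u)).erase r) u + 1) * p :=
        Nat.le_mul_of_pos_left p (Nat.succ_pos _)
      linarith [hmp]
    · rw [hf0 u h1, hf3 v h2]
      apply absk
      left
      have hb := Nat.mul_le_mul_right p (hslot_le v h2)
      linarith [hmp]
  -- distance-1 verification
  have ver1 : ∀ u v : V, G.dist u v = 1 →
      (h:ℤ) ≤ |(labl G r m h p u : ℤ) - (labl G r m h p v : ℤ)| := by
    intro u v hd
    have hadj := dist_eq_one_iff_adj.mp hd
    rcases adj_dist_root hT r hadj with h1 | h1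
    · exact gap_h u v hadj h1.symm
    · rw [abs_sub_comm]
      exact gap_h v u hadj.symm h1.symm
  -- distance-2 verification
  have ver2core : ∀ u v z : V, u ≠ v → G.Adj u z → G.Adj z v →
      G.dist r z = G.dist r u + 1 → G.dist r v = G.dist r z + 1 →
      (p:ℤ) ≤ |(labl G r m h p u : ℤ) - (labl G r m h p v : ℤ)| := by
    intro u v z hne hz1 hz2 e1 e2
    have hdv := hball v
    rcases (by omega : G.dist r u = 0 ∨ G.dist r u = 1) with h'|h'
    · -- (0,2)
      have hv2 : G.dist r v = 2 := by omega
      rw [hf0 u h', hf2 v hv2]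
      apply absk
      right
      have hb2 : p ≤ (idxIn ((G.neighborFinset (par G r v)).erase r) v + 1) * p :=
        Nat.le_mul_of_pos_left p (Nat.succ_pos _)
      linarith
    · -- (1,3) : u is the grandparent of v
      have hv3 : G.dist r v = 3 := by omega
      have hz2' : G.dist r z = 2 := by omega
      have hzv : z = par G r v := hparu v z hz2 (by omega)
      have huz : u = par G r z := hparu z u hz1 (by omega)
      rw [hf1 u h', hf3 v hv3]
      apply idx_gap
      intro hc
      apply hslot_ne v hv3
      rw [← hzv, ← huz]
      exact hc.symm
  have ver2 : ∀ u v : V, G.dist u v = 2 →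
      (p:ℤ) ≤ |(labl G r m h p u : ℤ) - (labl G r m h p v : ℤ)| := by
    intro u v hd
    have hne : u ≠ v := by
      rintro rfl
      rw [SimpleGraph.dist_self] at hd
      omega
    obtain ⟨z, hz1, hz2⟩ := dist2_decomp hconn hd
    have hdu := hball u
    have hdv := hball v
    have hdz := hball z
    rcases adj_dist_root hT r hz1 with e1 | e1 <;> rcases adj_dist_root hT r hz2 with e2 | e2
    · -- d z = d u + 1, d v = d z + 1 : case B
      exact ver2core u v z hne hz1 hz2 e1 e2
    · -- d z = d u + 1, d z = d v + 1 : u, v both lower neighbours of z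
      exact absurd (lower_unique hT r hz1 hz2.symm (by omega) (by omega)) hne
    · -- d u = d z + 1, d v = d z + 1 : same parent z
      have hzu : z = par G r u := hparu u z hz1.symm (by omega)
      have hzv : z = par G r v := hparu v z hz2 (by omega)
      rcases (by omega : G.dist r u = 1 ∨ G.dist r u = 2 ∨ G.dist r u = 3) with h'|h'|h'
      · have hv1 : G.dist r v = 1 := by omega
        rw [hf1 u h', hf1 v hv1]
        apply idx_gap
        intro hc
        exact hne (idxIn_inj _ u v (hd1mem u h') (hd1mem v hv1) hc)
      · have hv2 : G.dist r v = 2 := by omega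
        rw [hf2 u h', hf2 v hv2]
        rw [← hzu, ← hzv]
        apply idx_gap2
        intro hc
        have hc' : idxIn ((G.neighborFinset z).erase r) u
            = idxIn ((G.neighborFinset z).erase r) v := by omega
        apply hne
        have humem := hd2mem u h'
        have hvmem := hd2mem v hv2
        rw [← hzu] at humem
        rw [← hzv] at hvmem
        exact idxIn_inj _ u v humem hvmem hc'
      · have hv3 : G.dist r v = 3 := by omega
        rw [hf3 u h', hf3 v hv3]
        apply idx_gap
        intro hc
        exact hne (hslot_inj u v h' hv3 (by rw [← hzu, ← hzv]) hc)
    · -- d u = d z + 1, d z = d v + 1 : case B symm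
      rw [abs_sub_comm]
      exact ver2core v u z (Ne.symm hne) hz2.symm hz1.symm e2 e1
  -- distance-3 verification
  have ver3 : ∀ u v : V, G.dist u v = 3 →
      (p:ℤ) ≤ |(labl G r m h p u : ℤ) - (labl G r m h p v : ℤ)| := by
    intro u v hd
    obtain ⟨z, w, hz1, hz2, hz3⟩ := dist3_decomp hconn hd
    have e1 := adj_dist_root hT r hz1
    have e2 := adj_dist_root hT r hz2
    have e3 := adj_dist_root hT r hz3
    have hodd : (G.dist r u + 1 = G.dist r v ∨ G.dist r u + 3 = G.dist r v)
        ∨ (G.dist r v + 1 = G.dist r u ∨ G.dist r v + 3 = G.dist r u) := by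
      rcases e1 with e1|e1 <;> rcases e2 with e2|e2 <;> rcases e3 with e3|e3 <;> omega
    rcases hodd with hh | hh
    · exact gap_p u v hh
    · rw [abs_sub_comm]
      exact gap_p v u hh
  -- the labelling is an L(h,p,p)-labelling
  have hlab : IsLLabelling G h p (max h (2*p) + (2*m-1)*p) (labl G r m h p) := by
    refine ⟨hlab_le, ver1, ?_⟩
    intro u v hd
    rcases hd with hd | hd
    · exact ver2 u v hd
    · exact ver3 u v hd
  refine ⟨hlab, ?_⟩
  have hn0 : (max h (2*p) + (2*m-1)*p) + 1 ≠ 0 := by omega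
  set II : V → Set (ZMod ((max h (2*p) + (2*m-1)*p) + 1)) := fun v =>
      if G.dist r v = 0 then ival ((max h (2*p) + (2*m-1)*p) + 1) 0 ((m-1)*p)
      else if G.dist r v = 1 then
        ival ((max h (2*p) + (2*m-1)*p) + 1) ((m-1)*p + max h (2*p)) (m*p)
      else if G.dist r v = 2 then ival ((max h (2*p) + (2*m-1)*p) + 1) 0 (m*p)
      else ival ((max h (2*p) + (2*m-1)*p) + 1) (labl G r m h p (par G r v)) 0
    with hII
  have hI0 : ∀ v, G.dist r v = 0 →
      II v = ival ((max h (2*p) + (2*m-1)*p) + 1) 0 ((m-1)*p) := by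
    intro v hv
    simp only [hII]
    rw [if_pos hv]
  have hI1 : ∀ v, G.dist r v = 1 →
      II v = ival ((max h (2*p) + (2*m-1)*p) + 1) ((m-1)*p + max h (2*p)) (m*p) := by
    intro v hv
    simp only [hII]
    rw [if_neg (by omega), if_pos hv]
  have hI2 : ∀ v, G.dist r v = 2 →
      II v = ival ((max h (2*p) + (2*m-1)*p) + 1) 0 (m*p) := by
    intro v hv
    simp only [hII]
    rw [if_neg (by omega), if_neg (by omega), if_pos hv]
  have hI3 : ∀ v, G.dist r v = 3 →
      II v = ival ((max h (2*p) + (2*m-1)*p) + 1) (labl G r m h p (par G r v)) 0 := by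
    intro v hv
    simp only [hII]
    rw [if_neg (by omega), if_neg (by omega), if_neg (by omega)]
  refine ⟨II, ?_, ?_, ?_⟩
  · intro u
    have hdu := hball u
    rcases (by omega : G.dist r u = 0 ∨ G.dist r u = 1 ∨ G.dist r u = 2 ∨ G.dist r u = 3)
      with h'|h'|h'|h'
    · rw [hI0 u h']; exact ival_circ _ _ _
    · rw [hI1 u h']; exact ival_circ _ _ _
    · rw [hI2 u h']; exact ival_circ _ _ _
    · rw [hI3 u h']; exact ival_circ _ _ _
  · intro u w hadj
    have hdu := hball u
    have hdw := hball w
    rcases adj_dist_root hT r hadj with e | e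
    · rcases (by omega : G.dist r u = 0 ∨ G.dist r u = 1 ∨ G.dist r u = 2) with h'|h'|h'
      · rw [hI0 u h', hf1 w (by omega)]
        refine mem_ival _ (Nat.zero_le _) ?_
        have hb := Nat.mul_le_mul_right p (show idxIn (G.neighborFinset r) w ≤ m-1 by
          have := hidx1 w (by omega); omega)
        linarith
      · rw [hI1 u h', hf2 w (by omega)]
        refine mem_ival _ (Nat.le_add_right _ _) ?_
        have hb := Nat.mul_le_mul_right p
          (show idxIn ((G.neighborFinset (par G r w)).erase r) w + 1 ≤ m by
            have := hidx2 w (by omega); omega)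
        linarith
      · rw [hI2 u h', hf3 w (by omega)]
        refine mem_ival _ (Nat.zero_le _) ?_
        have hb := Nat.mul_le_mul_right p (hslot_le w (by omega))
        linarith
    · rcases (by omega : G.dist r u = 1 ∨ G.dist r u = 2 ∨ G.dist r u = 3) with h'|h'|h'
      · rw [hI1 u h', hf0 w (by omega)]
        exact mem_ival _ (le_refl _) (Nat.le_add_right _ _)
      · rw [hI2 u h', hf1 w (by omega)]
        refine mem_ival _ (Nat.zero_le _) ?_
        have hb := Nat.mul_le_mul_right p (show idxIn (G.neighborFinset r) w ≤ m by
          have := hidx1 w (by omega); omega)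
        linarith
      · rw [hI3 u h']
        have hw : w = par G r u := hparu u w hadj.symm (by omega)
        rw [← hw]
        exact mem_ival _ (le_refl _) (Nat.le_add_right _ _)
  · have disj_core : ∀ u v : V, G.dist r v = G.dist r u + 1 → II u ∩ II v = ∅ := by
      intro u v e
      have hdu := hball u
      have hdv := hball v
      rcases (by omega : G.dist r u = 0 ∨ G.dist r u = 1 ∨ G.dist r u = 2) with h'|h'|h'
      · rw [hI0 u h', hI1 v (by omega)]
        apply ival_inter_empty hn0
        · have : 0 < max h (2*p) := by linarith
          omega
        · have := hM_eq
          omega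
      · rw [hI1 u h', hI2 v (by omega)]
        rw [Set.inter_comm]
        apply ival_inter_empty hn0
        · have h1 : 0 + m*p < (m-1)*p + max h (2*p) := by
            have : m*p = (m-1)*p + p := hmp.symm
            linarith
          omega
        · have := hM_eq
          omega
      · have hv3 : G.dist r v = 3 := by omega
        rw [hI2 u h', hI3 v hv3]
        apply ival_inter_empty hn0
        · have hpv2 : G.dist r (par G r v) = 2 := hd3par v hv3
          rw [hf2 _ hpv2]
          have hb2 : p ≤ (idxIn ((G.neighborFinset (par G r (par G r v))).erase r) (par G r v) + 1) * p :=
            Nat.le_mul_of_pos_left p (Nat.succ_pos _)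
          have : m*p = (m-1)*p + p := hmp.symm
          linarith
        · have := hlab_le (par G r v)
          omega
    intro u v hadj
    rcases adj_dist_root hT r hadj with e | e
    · exact disj_core u v e
    · rw [Set.inter_comm]
      exact disj_core v u e

lemma lower_bound {V : Type} [Fintype V] [DecidableEq V] (G : SimpleGraph V) [DecidableRel G.Adj]
    (hT : G.IsTree) (m : ℕ) (hm : 2 ≤ m) (r : V)
    (hr : G.degree r = m)
    (hdeg : ∀ v : V, G.dist r v = 1 ∨ G.dist r v = 2 → G.degree v = m + 1)
    (h p : ℕ) (hp : 1 ≤ p) (hph : p ≤ h)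
    (ℓ : ℕ) (f : V → ℕ) (hf : IsLLabelling G h p ℓ f) :
    max (h + (2 * m - 1) * p) ((2 * m + 1) * p) ≤ ℓ := by
  have hconn := hT.isConnected
  obtain ⟨hf1, hf2, hf3⟩ := hf
  -- choose x, a neighbour of r
  have hNr : (G.neighborFinset r).card = m := by
    rw [card_neighborFinset_eq_degree]; exact hr
  have hNrne : (G.neighborFinset r).Nonempty := by
    rw [← Finset.card_pos, hNr]; omega
  obtain ⟨x, hx⟩ := hNrne
  have hadj_rx : G.Adj r x := by rwa [mem_neighborFinset] at hx
  have hdx : G.dist r x = 1 := dist_eq_one_iff_adj.mpr hadj_rx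
  have hdegx : G.degree x = m + 1 := hdeg x (Or.inl hdx)
  have hrNx : r ∈ G.neighborFinset x := by rw [mem_neighborFinset]; exact hadj_rx.symm
  -- children of x
  have hChcard : ((G.neighborFinset x).erase r).card = m := by
    rw [Finset.card_erase_of_mem hrNx, card_neighborFinset_eq_degree, hdegx]
    omega
  have hChne : ((G.neighborFinset x).erase r).Nonempty := by
    rw [← Finset.card_pos, hChcard]; omega
  obtain ⟨y, hyCh, hymin⟩ :=
    ((G.neighborFinset x).erase r).exists_min_image (fun w => |(f w : ℤ) - (f x : ℤ)|) hChne
  have hadj_xy : G.Adj x y := by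
    have := Finset.mem_of_mem_erase hyCh
    rwa [mem_neighborFinset] at this
  have hyr : y ≠ r := Finset.ne_of_mem_erase hyCh
  -- define the gadget
  set C : Finset V := (G.neighborFinset x).erase y with hC
  set D : Finset V := (G.neighborFinset y).erase x with hD
  have hCmem : ∀ w, w ∈ C ↔ (G.Adj x w ∧ w ≠ y) := by
    intro w
    rw [hC, Finset.mem_erase, mem_neighborFinset]; tauto
  have hDmem : ∀ w, w ∈ D ↔ (G.Adj y w ∧ w ≠ x) := by
    intro w
    rw [hD, Finset.mem_erase, mem_neighborFinset]; tauto
  have hCcard : C.card = m := by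
    rw [hC, Finset.card_erase_of_mem (by rw [mem_neighborFinset]; exact hadj_xy),
      card_neighborFinset_eq_degree, hdegx]
    omega
  have hdy : G.dist r y = 2 := by
    rcases adj_dist_root hT r hadj_xy with h1 | h1
    · omega
    · rw [hdx] at h1
      have h0 : G.dist r y = 0 := by omega
      have : y = r := by
        by_contra hne
        have := hconn.pos_dist_of_ne (by exact fun hh => hne hh.symm : r ≠ y)
        omega
      exact absurd this hyr
  have hdegy : G.degree y = m + 1 := hdeg y (Or.inr hdy)
  have hDcard : D.card = m := by
    rw [hD, Finset.card_erase_of_mem (by rw [mem_neighborFinset]; exact hadj_xy.symm),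
      card_neighborFinset_eq_degree, hdegy]
    omega
  -- distance facts
  have distCx : ∀ w ∈ C, G.dist w x = 1 := by
    intro w hw
    exact dist_eq_one_iff_adj.mpr (((hCmem w).mp hw).1.symm)
  have distDy : ∀ w ∈ D, G.dist w y = 1 := by
    intro w hw
    exact dist_eq_one_iff_adj.mpr (((hDmem w).mp hw).1.symm)
  have distCy : ∀ w ∈ C, G.dist w y = 2 := by
    intro w hw
    obtain ⟨haw, hwy⟩ := (hCmem w).mp hw
    have hwalk : (Walk.cons haw.symm (Walk.cons hadj_xy Walk.nil) : G.Walk w y).IsPath := by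
      simp [Walk.cons_isPath_iff]
      exact ⟨hadj_xy.ne, fun hh => haw.ne hh.symm, hwy⟩
    have := tree_dist_of_isPath hT _ hwalk
    simpa using this
  have distDx : ∀ w ∈ D, G.dist w x = 2 := by
    intro w hw
    obtain ⟨haw, hwx⟩ := (hDmem w).mp hw
    have hwalk : (Walk.cons haw.symm (Walk.cons hadj_xy.symm Walk.nil) : G.Walk w x).IsPath := by
      simp [Walk.cons_isPath_iff]
      exact ⟨hadj_xy.ne', fun hh => haw.ne hh.symm, hwx⟩
    have := tree_dist_of_isPath hT _ hwalk
    simpa using this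
  have distCC : ∀ w ∈ C, ∀ w' ∈ C, w ≠ w' → G.dist w w' = 2 := by
    intro w hw w' hw' hne
    obtain ⟨haw, -⟩ := (hCmem w).mp hw
    obtain ⟨haw', -⟩ := (hCmem w').mp hw'
    have hwalk : (Walk.cons haw.symm (Walk.cons haw' Walk.nil) : G.Walk w w').IsPath := by
      simp [Walk.cons_isPath_iff]
      exact ⟨haw'.ne, fun hh => haw.ne hh.symm, hne⟩
    have := tree_dist_of_isPath hT _ hwalk
    simpa using this
  have distDD : ∀ w ∈ D, ∀ w' ∈ D, w ≠ w' → G.dist w w' = 2 := by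
    intro w hw w' hw' hne
    obtain ⟨haw, -⟩ := (hDmem w).mp hw
    obtain ⟨haw', -⟩ := (hDmem w').mp hw'
    have hwalk : (Walk.cons haw.symm (Walk.cons haw' Walk.nil) : G.Walk w w').IsPath := by
      simp [Walk.cons_isPath_iff]
      exact ⟨haw'.ne, fun hh => haw.ne hh.symm, hne⟩
    have := tree_dist_of_isPath hT _ hwalk
    simpa using this
  have hCD : ∀ w, w ∈ C → w ∈ D → False := by
    intro w hwC hwD
    have h1 := distCy w hwC
    have h2 := distDy w hwD
    omega
  have distCD : ∀ w ∈ C, ∀ w' ∈ D, G.dist w w' = 3 := by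
    intro w hw w' hw'
    obtain ⟨haw, hwy⟩ := (hCmem w).mp hw
    obtain ⟨haw', hwx'⟩ := (hDmem w').mp hw'
    have hww' : w ≠ w' := by
      intro hh
      exact hCD w hw (hh ▸ hw')
    have n1 : w ≠ x := haw.ne'
    have n2 : x ≠ y := hadj_xy.ne
    have n3 : x ≠ w' := Ne.symm hwx'
    have n4 : y ≠ w' := haw'.ne
    have hwalk : (Walk.cons haw.symm (Walk.cons hadj_xy (Walk.cons haw' Walk.nil)) :
        G.Walk w w').IsPath := by
      rw [Walk.isPath_def]
      simp [n1, n2, n3, n4, hwy, hww']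
    have := tree_dist_of_isPath hT _ hwalk
    simpa using this
  -- basic non-memberships
  have hxC : x ∉ C := by rw [hCmem]; simp
  have hxD : x ∉ D := by rw [hDmem]; simp
  have hyC : y ∉ C := by rw [hCmem]; simp
  have hyD : y ∉ D := by rw [hDmem]; simp
  have hxy : x ≠ y := hadj_xy.ne
  -- labelling facts
  set F : V → ℤ := fun v => (f v : ℤ) with hF
  have hsep0 : ∀ u v : V, u ≠ v →
      (G.dist u v = 1 ∨ G.dist u v = 2 ∨ G.dist u v = 3) → (p:ℤ) ≤ |F u - F v| := by
    intro u v hne hd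
    rcases hd with h1 | h2
    · have := hf2 u v h1
      have hph' : (p:ℤ) ≤ h := by exact_mod_cast hph
      linarith
    · exact hf3 u v h2
  have hdS : ∀ u ∈ C ∪ D ∪ ({x, y} : Finset V), ∀ v ∈ C ∪ D ∪ ({x, y} : Finset V),
      u ≠ v → (G.dist u v = 1 ∨ G.dist u v = 2 ∨ G.dist u v = 3) := by
    intro u hu v hv hne
    simp only [Finset.mem_union, Finset.mem_insert, Finset.mem_singleton] at hu hv
    have hsymm : ∀ a b : V, G.dist a b = G.dist b a := fun a b => dist_comm ..
    rcases hu with (huC | huD) | (rfl | rfl) <;> rcases hv with (hvC | hvD) | (rfl | rfl)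
    · exact Or.inr (Or.inl (distCC u huC v hvC hne))
    · exact Or.inr (Or.inr (distCD u huC v hvD))
    · exact Or.inl (distCx u huC)
    · exact Or.inr (Or.inl (distCy u huC))
    · rw [hsymm]; exact Or.inr (Or.inr (distCD v hvC u huD))
    · exact Or.inr (Or.inl (distDD u huD v hvD hne))
    · exact Or.inr (Or.inl (distDx u huD))
    · exact Or.inl (distDy u huD)
    · rw [hsymm]; exact Or.inl (distCx v hvC)
    · rw [hsymm]; exact Or.inr (Or.inl (distDx v hvD))
    · exact absurd rfl hne
    · exact Or.inl (dist_eq_one_iff_adj.mpr hadj_xy)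
    · rw [hsymm]; exact Or.inr (Or.inl (distCy v hvC))
    · rw [hsymm]; exact Or.inl (distDy v hvD)
    · rw [hsymm]; exact Or.inl (dist_eq_one_iff_adj.mpr hadj_xy)
    · exact absurd rfl hne
  have hsep : ∀ u ∈ C ∪ D ∪ ({x, y} : Finset V), ∀ v ∈ C ∪ D ∪ ({x, y} : Finset V),
      u ≠ v → (p:ℤ) ≤ |F u - F v| := by
    intro u hu v hv hne
    exact hsep0 u v hne (hdS u hu v hv hne)
  have hbd : ∀ v, v ∈ C ∪ D ∪ ({x, y} : Finset V) → 0 ≤ F v ∧ F v ≤ (ℓ:ℤ) := by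
    intro v _
    refine ⟨Int.natCast_nonneg _, ?_⟩
    simp only [hF]
    exact_mod_cast hf1 v
  have hD_y : ∀ w ∈ D, (h:ℤ) ≤ |F w - F y| := by
    intro w hw
    exact hf2 w y (distDy w hw)
  have habs : (h:ℤ) ≤ |F x - F y| := hf2 x y (dist_eq_one_iff_adj.mpr hadj_xy)
  -- apply core_bound, splitting on sign
  have key : ((h:ℤ) + (2*(m:ℤ) - 1) * p ≤ (ℓ:ℤ)) ∧ ((2*(m:ℤ)+1) * p ≤ (ℓ:ℤ)) := by
    rcases abs_cases (F x - F y) with ⟨habs1, -⟩ | ⟨habs1, -⟩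
    · -- F x ≥ F y + h : use reflected labelling F' = fun v => F v with roles...
      -- here F x - F y ≥ h, so apply with F' := fun v => (ℓ:ℤ) - F v
      refine core_bound h p m ℓ hp hph (by omega) x y r C D (fun v => (ℓ:ℤ) - F v)
        hCcard hDcard (by rw [Finset.disjoint_left]; intro a ha hb; exact hCD a ha hb)
        hxC hxD hyC hyD hxy ?_ ?_ ?_ ?_ ?_
      · intro v hv
        have hb := hbd v hv
        constructor
        · show (0:ℤ) ≤ (ℓ:ℤ) - F v
          linarith [hb.2]
        · show (ℓ:ℤ) - F v ≤ (ℓ:ℤ)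
          linarith [hb.1]
      · show (h:ℤ) ≤ ((ℓ:ℤ) - F y) - ((ℓ:ℤ) - F x)
        rw [habs1] at habs; linarith
      · intro u hu v hv hne
        have := hsep u hu v hv hne
        show (p:ℤ) ≤ |((ℓ:ℤ) - F u) - ((ℓ:ℤ) - F v)|
        have heq : ((ℓ:ℤ) - F u) - ((ℓ:ℤ) - F v) = -(F u - F v) := by ring
        rw [heq, abs_neg]; exact this
      · intro w hw
        have := hD_y w hw
        show (h:ℤ) ≤ |((ℓ:ℤ) - F w) - ((ℓ:ℤ) - F y)|
        have heq : ((ℓ:ℤ) - F w) - ((ℓ:ℤ) - F y) = -(F w - F y) := by ring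
        rw [heq, abs_neg]; exact this
      · intro w hwC h1 h2
        have h1' : (ℓ:ℤ) - F x < (ℓ:ℤ) - F w := h1
        have h2' : (ℓ:ℤ) - F w < (ℓ:ℤ) - F y := h2
        by_contra hwr
        have hwCh : w ∈ (G.neighborFinset x).erase r := by
          rw [Finset.mem_erase, mem_neighborFinset]
          exact ⟨hwr, ((hCmem w).mp hwC).1⟩
        have hmin := hymin w hwCh
        have hwx : F w < F x := by linarith [h1']
        have hwy : F y < F w := by linarith [h2']
        have e1 : |F w - F x| = F x - F w := by rw [abs_sub_comm]; exact abs_of_nonneg (by linarith)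
        have hh0 : (0:ℤ) ≤ (h:ℤ) := Int.natCast_nonneg h
        have e2 : |F y - F x| = F x - F y := by
          rw [abs_sub_comm]; exact abs_of_nonneg (by rw [habs1] at habs; linarith)
        rw [e1, e2] at hmin
        have hwyne : w ≠ y := ((hCmem w).mp hwC).2
        have hsepwy := hsep0 w y hwyne (Or.inr (Or.inl (distCy w hwC)))
        have : (p:ℤ) ≤ F w - F y := by
          rcases abs_cases (F w - F y) with ⟨hh, -⟩ | ⟨hh, -⟩ <;> linarith
        linarith
    · refine core_bound h p m ℓ hp hph (by omega) x y r C D F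
        hCcard hDcard (by rw [Finset.disjoint_left]; intro a ha hb; exact hCD a ha hb)
        hxC hxD hyC hyD hxy hbd ?_ hsep hD_y ?_
      · rw [habs1] at habs; linarith
      · intro w hwC h1 h2
        by_contra hwr
        have hwCh : w ∈ (G.neighborFinset x).erase r := by
          rw [Finset.mem_erase, mem_neighborFinset]
          exact ⟨hwr, ((hCmem w).mp hwC).1⟩
        have hmin := hymin w hwCh
        have e1 : |F w - F x| = F w - F x := abs_of_nonneg (by linarith)
        have hh0 : (0:ℤ) ≤ (h:ℤ) := Int.natCast_nonneg h
        have e2 : |F y - F x| = F y - F x := by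
          apply abs_of_nonneg
          rw [habs1] at habs
          linarith
        rw [e1, e2] at hmin
        have hwyne : w ≠ y := ((hCmem w).mp hwC).2
        have hsepwy := hsep0 w y hwyne (Or.inr (Or.inl (distCy w hwC)))
        have : (p:ℤ) ≤ F y - F w := by
          rcases abs_cases (F w - F y) with ⟨hh, -⟩ | ⟨hh, -⟩ <;> linarith
        linarith
  -- convert to ℕ
  have hm1 : (1:ℤ) ≤ m := by exact_mod_cast (by omega : 1 ≤ m)
  have c1 : h + (2 * m - 1) * p ≤ ℓ := by
    have := key.1
    have hcast : ((h + (2 * m - 1) * p : ℕ) : ℤ) = (h:ℤ) + (2*(m:ℤ) - 1) * p := by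
      push_cast [Nat.cast_sub (by omega : 1 ≤ 2*m)]
      ring
    have : ((h + (2 * m - 1) * p : ℕ) : ℤ) ≤ (ℓ:ℤ) := by rw [hcast]; exact this
    exact_mod_cast this
  have c2 : (2 * m + 1) * p ≤ ℓ := by
    have := key.2
    have hcast : (((2 * m + 1) * p : ℕ) : ℤ) = (2*(m:ℤ)+1) * p := by push_cast; ring
    have : (((2 * m + 1) * p : ℕ) : ℤ) ≤ (ℓ:ℤ) := by rw [hcast]; exact this
    exact_mod_cast this
  exact max_le c1 c2

theorem stmt8 {V : Type} [Fintype V] (G : SimpleGraph V) [DecidableRel G.Adj]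
    (hT : G.IsTree) (m : ℕ) (hm : 2 ≤ m) (r : V)
    (hr : G.degree r = m)
    (hdeg : ∀ v : V, G.dist r v = 1 ∨ G.dist r v = 2 → G.degree v = m + 1)
    (hball : ∀ v : V, G.dist r v ≤ 3)
    (h p : ℕ) (hp : 1 ≤ p) (hph : p ≤ h) :
    lambdaNum G h p = max (h + (2 * m - 1) * p) ((2 * m + 1) * p) ∧
    lambdaStar G h p = max (h + (2 * m - 1) * p) ((2 * m + 1) * p) := by
  classical
  have e1 : 2*p + (2*m-1)*p = (2*m+1)*p := by
    have h1 : 2 + (2*m-1) = 2*m+1 := by omega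
    calc 2*p + (2*m-1)*p = (2 + (2*m-1))*p := by ring
      _ = (2*m+1)*p := by rw [h1]
  have hMeq : max h (2*p) + (2*m-1)*p = max (h + (2 * m - 1) * p) ((2 * m + 1) * p) := by
    rcases le_total h (2*p) with hc | hc
    · rw [max_eq_right hc, max_eq_right (by linarith : h + (2*m-1)*p ≤ (2*m+1)*p)]
      exact e1
    · rw [max_eq_left hc, max_eq_left (by linarith : (2*m+1)*p ≤ h + (2*m-1)*p)]
  have hcons := construction G hT m hm r hr hdeg hball h p hp hph
  rw [hMeq] at hcons
  have hmemE : max (h + (2 * m - 1) * p) ((2 * m + 1) * p)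
      ∈ {ℓ : ℕ | ∃ f : V → ℕ, IsElegantLLabelling G h p ℓ f} := ⟨_, hcons⟩
  have hmemL : max (h + (2 * m - 1) * p) ((2 * m + 1) * p)
      ∈ {ℓ : ℕ | ∃ f : V → ℕ, IsLLabelling G h p ℓ f} := ⟨_, hcons.1⟩
  have hlb : ∀ ℓ ∈ {ℓ : ℕ | ∃ f : V → ℕ, IsLLabelling G h p ℓ f},
      max (h + (2 * m - 1) * p) ((2 * m + 1) * p) ≤ ℓ := by
    rintro ℓ ⟨f, hf⟩
    exact lower_bound G hT m hm r hr hdeg h p hp hph ℓ f hf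
  constructor
  · rw [lambdaNum]
    apply le_antisymm
    · exact Nat.sInf_le hmemL
    · exact hlb _ (Nat.sInf_mem ⟨_, hmemL⟩)
  · rw [lambdaStar]
    apply le_antisymm
    · exact Nat.sInf_le hmemE
    · obtain ⟨f, hf⟩ := Nat.sInf_mem (⟨_, hmemE⟩ :
        Set.Nonempty {ℓ : ℕ | ∃ f : V → ℕ, IsElegantLLabelling G h p ℓ f})
      exact hlb _ ⟨f, hf.1⟩
end

section
/- Let T be a finite tree with diameter at least 3 and maximum degree Δ ≥ 3, and let h be an integer with h ≥ Δ. Then σ_{h,1,1}(T) = σ*_{h,1,1}(T) = 2h + Δ − 1. -/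
open SimpleGraph

/-!
Lower bound: the neighbours of a vertex `u` of maximum degree are pairwise at distance at most 2,
so they carry distinct labels, and each label lies at cyclic distance at least `h` from that of
`u`, i.e. in a window of `ℓ - 2h + 1` residues; hence `Δ ≤ ℓ - 2h + 1`.

Upper bound, for `ℓ = 2h + Δ - 1`: number the neighbours of every vertex `u` injectively by
`τ u : V → {0, …, Δ - 1}` so that the two ends of each edge get numbers summing to `Δ - 1`; on a
tree this is done by rotating arbitrary numberings (mod `Δ`) outward from a root. The rule
`f w = f u + h + τ u w` for every edge `uw` is then consistent modulo `ℓ`, so it defines labels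
from the root. The neighbours of `u` land in the interval `f u + h + [0, Δ - 1]`. Along a path
`u w v` the labels differ by `τ w u - τ w v ≠ 0`; along a path `u w x v` by
`h + τ w u + τ x w - τ x v ∈ [h - Δ + 1, h + 2Δ - 2] ⊆ [1, ℓ - 1]`, using `Δ ≤ h`. The same
estimate makes the intervals at the two ends of an edge disjoint.
-/

namespace SimpleGraph

variable {V α : Type*} {G : SimpleGraph V}

lemma exists_adj_adj_of_dist_eq_two {u v : V} (h : G.dist u v = 2) :
    ∃ w, G.Adj u w ∧ G.Adj w v := by
  obtain ⟨p, hp⟩ := exists_walk_of_dist_ne_zero (by omega : G.dist u v ≠ 0)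
  have hend := p.getVert_length
  rw [hp, h] at hend
  exact ⟨p.getVert 1, by simpa using p.adj_getVert_succ (i := 0) (by omega),
    by simpa [hend] using p.adj_getVert_succ (i := 1) (by omega)⟩

lemma exists_adj_adj_adj_of_dist_eq_three {u v : V} (h : G.dist u v = 3) :
    ∃ w x, G.Adj u w ∧ G.Adj w x ∧ G.Adj x v := by
  obtain ⟨p, hp⟩ := exists_walk_of_dist_ne_zero (by omega : G.dist u v ≠ 0)
  have hend := p.getVert_length
  rw [hp, h] at hend
  exact ⟨p.getVert 1, p.getVert 2, by simpa using p.adj_getVert_succ (i := 0) (by omega),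
    p.adj_getVert_succ (i := 1) (by omega),
    by simpa [hend] using p.adj_getVert_succ (i := 2) (by omega)⟩

lemma dist_eq_one_or_two_of_adj_of_adj {u w₁ w₂ : V} (h₁ : G.Adj u w₁) (h₂ : G.Adj u w₂)
    (hne : w₁ ≠ w₂) : G.dist w₁ w₂ = 1 ∨ G.dist w₁ w₂ = 2 := by
  have hle : G.dist w₁ w₂ ≤ 2 := dist_le (.cons h₁.symm (.cons h₂ .nil))
  have h0 : G.dist w₁ w₂ ≠ 0 :=
    dist_ne_zero_iff_ne_and_reachable.2 ⟨hne, (h₁.symm.reachable.trans h₂.reachable)⟩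
  omega

lemma dist_le_of_mem_support {r u x : V} {p : G.Walk r u} (hp : p.length = G.dist r u)
    (hx : x ∈ p.support) : G.dist r x ≤ G.dist r u := by
  classical
  exact hp ▸ (dist_le _).trans (p.length_takeUntil_le_length hx)

lemma IsTree.eq_of_adj_of_dist_add_one_eq (hT : G.IsTree) {r v u₁ u₂ : V}
    (h₁ : G.Adj u₁ v) (h₂ : G.Adj u₂ v) (hd₁ : G.dist r u₁ + 1 = G.dist r v)
    (hd₂ : G.dist r u₂ + 1 = G.dist r v) : u₁ = u₂ := by
  obtain ⟨q₁, hq₁, hl₁⟩ := hT.connected.exists_path_of_dist r u₁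
  obtain ⟨q₂, hq₂, hl₂⟩ := hT.connected.exists_path_of_dist r u₂
  have hv₁ : v ∉ q₁.support := fun hv => by have := dist_le_of_mem_support hl₁ hv; omega
  have hv₂ : v ∉ q₂.support := fun hv => by have := dist_le_of_mem_support hl₂ hv; omega
  have hq := hq₂.concat hv₂ h₂
  have hmem := hT.isAcyclic.mem_support_of_ne_mem_support_of_adj_of_isPath hq hq₁ h₁.symm hv₁
  simpa using hT.isAcyclic.eq_penultimate_of_adj_end hq h₁.symm hmem

open Classical in
/-- The value at `v` is `g u v` applied to the value at the neighbour `u` of `v` one step closer to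
the root `r`; the root gets `a`. -/
noncomputable def propagate (G : SimpleGraph V) (r : V) (a : α) (g : V → V → α → α) (v : V) : α :=
  if h : ∃ u, G.Adj u v ∧ G.dist r u + 1 = G.dist r v then
    g h.choose v (propagate G r a g h.choose)
  else a
termination_by G.dist r v
decreasing_by exact Nat.lt_of_lt_of_eq (Nat.lt_succ_self _) h.choose_spec.2

lemma IsTree.propagate_eq (hT : G.IsTree) (r : V) (a : α) (g : V → V → α → α) {u v : V}
    (huv : G.Adj u v) (hd : G.dist r u + 1 = G.dist r v) :
    G.propagate r a g v = g u v (G.propagate r a g u) := by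
  have h : ∃ u, G.Adj u v ∧ G.dist r u + 1 = G.dist r v := ⟨u, huv, hd⟩
  rw [propagate.eq_def, dif_pos h,
    hT.eq_of_adj_of_dist_add_one_eq h.choose_spec.1 huv h.choose_spec.2 hd]

theorem IsTree.exists_forall_adj_eq (hT : G.IsTree) [Nonempty α] (g : V → V → α → α)
    (hg : ∀ u w, G.Adj u w → ∀ a, g w u (g u w a) = a) :
    ∃ F : V → α, ∀ u w, G.Adj u w → F w = g u w (F u) := by
  obtain ⟨r⟩ := hT.connected.nonempty
  refine ⟨G.propagate r (Classical.arbitrary α) g, fun u w huw => ?_⟩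
  rcases hT.dist_eq_dist_add_one_of_adj r huw with hd | hd
  · rw [hT.propagate_eq r _ g huw.symm hd.symm, hg w u huw.symm]
  · exact hT.propagate_eq r _ g huw hd.symm

theorem IsTree.exists_ports [G.LocallyFinite] (hT : G.IsTree) {D : ℕ} (hD : 0 < D)
    (hdeg : ∀ v, G.degree v ≤ D) :
    ∃ τ : V → V → ℕ, (∀ u w, τ u w < D) ∧ (∀ u, Set.InjOn (τ u) (G.neighborSet u)) ∧
      ∀ u w, G.Adj u w → τ u w + τ w u + 1 = D := by
  have : NeZero D := ⟨hD.ne'⟩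
  have hι : ∀ u, ∃ ι : V → ZMod D, Set.InjOn ι (G.neighborSet u) := fun u => by
    classical
    obtain ⟨e⟩ := Function.Embedding.nonempty_of_card_le (α := G.neighborSet u) (β := ZMod D)
      (by rw [card_neighborSet_eq_degree, ZMod.card]; exact hdeg u)
    refine ⟨fun w => if hw : w ∈ G.neighborSet u then e ⟨w, hw⟩ else 0, fun w₁ h₁ w₂ h₂ h => ?_⟩
    simp only [dif_pos h₁, dif_pos h₂] at h
    exact congrArg Subtype.val (e.injective h)
  choose ι hι using hι
  obtain ⟨s, hs⟩ := hT.exists_forall_adj_eq (fun u w a => -1 - ι u w - ι w u - a)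
    (fun u w _ a => by ring)
  refine ⟨fun u w => (ι u w + s u).val, fun u w => ZMod.val_lt _, fun u => ?_, fun u w huw => ?_⟩
  · exact (ZMod.val_injective D).comp_injOn ((add_left_injective (s u)).comp_injOn (hι u))
  · dsimp only
    have hsum : (((ι u w + s u).val + (ι w u + s w).val + 1 : ℕ) : ZMod D) = 0 := by
      push_cast [ZMod.natCast_zmod_val]
      rw [hs u w huw]
      ring
    rw [ZMod.natCast_eq_zero_iff] at hsum
    have := ZMod.val_lt (ι u w + s u)
    have := ZMod.val_lt (ι w u + s w)
    exact Nat.eq_of_dvd_of_lt_two_mul (by omega) hsum (by omega)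

end SimpleGraph

lemma ZMod.intCast_ne_zero_of_abs_lt {ℓ : ℕ} {n : ℤ} (h0 : n ≠ 0) (hn : |n| < ℓ) :
    (n : ZMod ℓ) ≠ 0 :=
  fun h => h0 (Int.eq_zero_of_abs_lt_dvd ((ZMod.intCast_zmod_eq_zero_iff_dvd n ℓ).1 h) hn)

lemma le_cycDist_val_iff {ℓ k p : ℕ} [NeZero ℓ] {x y : ZMod ℓ} (hk : k < ℓ) (hxy : y = x + k) :
    (p : ℤ) ≤ cycDist ℓ x.val y.val ↔ p ≤ k ∧ k + p ≤ ℓ := by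
  have hy : y.val = (x.val + k) % ℓ := by
    rw [hxy, ZMod.val_add, ZMod.val_natCast, Nat.mod_eq_of_lt hk]
  have hx := ZMod.val_lt x
  have hwrap : y.val = x.val + k ∨ y.val + ℓ = x.val + k := by
    rcases lt_or_ge (x.val + k) ℓ with h | h
    · left; rw [hy, Nat.mod_eq_of_lt h]
    · right; rw [hy, Nat.mod_eq_sub_mod h, Nat.mod_eq_of_lt (by omega)]; omega
  rw [cycDist, le_min_iff]
  rcases hwrap with h | h <;> rcases abs_cases ((x.val : ℤ) - y.val) with ⟨he, _⟩ | ⟨he, _⟩ <;>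
    rw [he] <;> omega

lemma one_le_cycDist_val {ℓ : ℕ} [NeZero ℓ] {x y : ZMod ℓ} (hxy : x ≠ y) :
    1 ≤ cycDist ℓ x.val y.val := by
  have hk : (y - x).val ≠ 0 := by rwa [ne_eq, ZMod.val_eq_zero, sub_eq_zero, eq_comm]
  have := ZMod.val_lt (y - x)
  exact_mod_cast (le_cycDist_val_iff (p := 1) this (by simp)).2 ⟨by omega, by omega⟩

namespace SimpleGraph

variable {V : Type} {G : SimpleGraph V}

section Ports

variable {h D ℓ : ℕ} {τ : V → V → ℕ} {F : V → ZMod ℓ}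

lemma ne_of_dist_eq_two_or_three_of_ports (hDh : D ≤ h) (hℓ : 2 * h + D = ℓ + 1)
    (hτ : ∀ u w, τ u w < D) (hinj : ∀ u, Set.InjOn (τ u) (G.neighborSet u))
    (hF : ∀ u w, G.Adj u w → F w = F u + (h + τ u w : ℕ)) {u v : V}
    (huv : G.dist u v = 2 ∨ G.dist u v = 3) : F u ≠ F v := by
  rw [← sub_ne_zero]
  rcases huv with huv | huv
  · obtain ⟨w, huw, hwv⟩ := exists_adj_adj_of_dist_eq_two huv
    have hne : τ w u ≠ τ w v := fun h => by
      rw [hinj w huw.symm hwv h, dist_self] at huv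
      omega
    have hdiff : F u - F v = ((τ w u - τ w v : ℤ) : ZMod ℓ) := by
      rw [hF w u huw.symm, hF w v hwv]
      push_cast
      ring
    have := hτ w u
    have := hτ w v
    rw [hdiff]
    exact ZMod.intCast_ne_zero_of_abs_lt (by omega) (abs_lt.2 ⟨by omega, by omega⟩)
  · obtain ⟨w, x, huw, hwx, hxv⟩ := exists_adj_adj_adj_of_dist_eq_three huv
    have hdiff : F u - F v = ((h + τ w u + τ x w - τ x v : ℤ) : ZMod ℓ) := by
      rw [hF w u huw.symm, hF x w hwx.symm, hF x v hxv]
      push_cast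
      ring
    have := hτ w u
    have := hτ x w
    have := hτ x v
    rw [hdiff]
    exact ZMod.intCast_ne_zero_of_abs_lt (by omega) (abs_lt.2 ⟨by omega, by omega⟩)

theorem isElegantCLabelling_val [NeZero ℓ] (hDh : D ≤ h) (hℓ : 2 * h + D = ℓ + 1)
    (hτ : ∀ u w, τ u w < D) (hinj : ∀ u, Set.InjOn (τ u) (G.neighborSet u))
    (hF : ∀ u w, G.Adj u w → F w = F u + (h + τ u w : ℕ)) :
    IsElegantCLabelling G h 1 ℓ (fun v => (F v).val) := by
  refine ⟨⟨fun v => ZMod.val_lt _, fun u v huv => ?_, fun u v huv => ?_⟩, ?_⟩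
  · have huv := dist_eq_one_iff_adj.1 huv
    have := hτ u v
    exact (le_cycDist_val_iff (by omega) (hF u v huv)).2 ⟨by omega, by omega⟩
  · exact one_le_cycDist_val (ne_of_dist_eq_two_or_three_of_ports hDh hℓ hτ hinj hF huv)
  refine ⟨fun u => {x | ∃ i : ℕ, i ≤ D - 1 ∧ x = F u + h + i}, fun u => ⟨_, _, rfl⟩,
    fun u w huw => ⟨τ u w, by have := hτ u w; omega, ?_⟩, fun u w huw => ?_⟩
  · rw [ZMod.natCast_zmod_val, hF u w huw]
    push_cast
    ring
  · rw [Set.eq_empty_iff_forall_notMem]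
    rintro x ⟨⟨i, hi, rfl⟩, j, hj, hx⟩
    have hzero : ((h + τ u w + j - i : ℤ) : ZMod ℓ) = 0 := by
      rw [hF u w huw] at hx
      push_cast at hx ⊢
      linear_combination -hx
    have := hτ u w
    exact ZMod.intCast_ne_zero_of_abs_lt (by omega) (abs_lt.2 ⟨by omega, by omega⟩) hzero

end Ports

theorem IsTree.exists_isElegantCLabelling [G.LocallyFinite] (hT : G.IsTree) {h D : ℕ}
    (hD : 0 < D) (hDh : D ≤ h) (hdeg : ∀ v, G.degree v ≤ D) :
    ∃ f, IsElegantCLabelling G h 1 (2 * h + D - 1) f := by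
  have : NeZero (2 * h + D - 1) := ⟨by omega⟩
  obtain ⟨τ, hτ, hinj, hsum⟩ := hT.exists_ports hD hdeg
  obtain ⟨F, hF⟩ := hT.exists_forall_adj_eq
    (fun u w a => a + ((h + τ u w : ℕ) : ZMod (2 * h + D - 1))) fun u w huw a => by
      have : ((h + τ u w + (h + τ w u) : ℕ) : ZMod (2 * h + D - 1)) = 0 := by
        rw [show h + τ u w + (h + τ w u) = 2 * h + D - 1 by have := hsum u w huw; omega,
          ZMod.natCast_self]
      push_cast at this ⊢
      linear_combination this
  exact ⟨_, isElegantCLabelling_val hDh (by omega) hτ hinj hF⟩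

end SimpleGraph

theorem IsCLabelling.two_mul_add_degree_le {V : Type} {G : SimpleGraph V} [G.LocallyFinite]
    {h p ℓ : ℕ} {f : V → ℕ} (hf : IsCLabelling G h p ℓ f) (hh : 0 < h) (hp : 0 < p) {u : V}
    (hu : 0 < G.degree u) :
    2 * h + G.degree u ≤ ℓ + 1 := by
  classical
  obtain ⟨hlt, hadj, hdist⟩ := hf
  have : NeZero ℓ := ⟨(Nat.zero_le _).trans_lt (hlt u) |>.ne'⟩
  have hval : ∀ v, ((f v : ZMod ℓ)).val = f v := fun v => ZMod.val_cast_of_lt (hlt v)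
  set k : V → ℕ := fun w => ((f w : ZMod ℓ) - f u).val
  have hmaps : ∀ w ∈ G.neighborFinset u, k w ∈ Finset.Icc h (ℓ - h) := by
    intro w hw
    have hcyc := hadj u w (dist_eq_one_iff_adj.2 ((mem_neighborFinset _ _ _).1 hw))
    rw [← hval u, ← hval w, le_cycDist_val_iff (k := k w) (ZMod.val_lt _) (by simp [k])] at hcyc
    rw [Finset.mem_Icc]
    omega
  have hinj : Set.InjOn k (G.neighborFinset u) := by
    intro w₁ hw₁ w₂ hw₂ hk
    by_contra hne
    have hfw : f w₁ = f w₂ := by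
      rw [← hval w₁, ← hval w₂, sub_left_inj.1 (ZMod.val_injective ℓ hk)]
    rcases dist_eq_one_or_two_of_adj_of_adj ((mem_neighborFinset _ _ _).1 hw₁)
      ((mem_neighborFinset _ _ _).1 hw₂) hne with hd | hd
    · have := hadj _ _ hd; simp [cycDist, hfw] at this; omega
    · have := hdist _ _ (.inl hd); simp [cycDist, hfw] at this; omega
  have hcard := Finset.card_le_card_of_injOn k hmaps hinj
  rw [Nat.card_Icc, card_neighborFinset_eq_degree] at hcard
  obtain ⟨w, hw⟩ := (G.degree_pos_iff_exists_adj u).1 hu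
  have := Finset.mem_Icc.1 (hmaps w ((mem_neighborFinset _ _ _).2 hw))
  omega

theorem stmt11_general {V : Type} [Fintype V] (G : SimpleGraph V) [DecidableRel G.Adj]
    (hT : G.IsTree) (hD : 3 ≤ G.maxDegree)
    (h : ℕ) (hh : G.maxDegree ≤ h) :
    sigmaNum G h 1 = 2 * h + G.maxDegree - 1 ∧
    sigmaStar G h 1 = 2 * h + G.maxDegree - 1 := by
  have : Nonempty V := hT.connected.nonempty
  obtain ⟨u, hu⟩ := G.exists_maximal_degree_vertex
  obtain ⟨f, hf⟩ := hT.exists_isElegantCLabelling (by omega) hh G.degree_le_maxDegree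
  have hlower : ∀ ℓ ∈ {ℓ : ℕ | 0 < ℓ ∧ ∃ f : V → ℕ, IsCLabelling G h 1 ℓ f},
      2 * h + G.maxDegree - 1 ≤ ℓ := by
    rintro ℓ ⟨-, f, hf⟩
    have := hf.two_mul_add_degree_le (u := u) (by omega) one_pos (by omega)
    omega
  have hpos : 0 < 2 * h + G.maxDegree - 1 := by omega
  exact ⟨IsLeast.csInf_eq ⟨⟨hpos, f, hf.1⟩, hlower⟩,
    IsLeast.csInf_eq ⟨⟨hpos, f, hf⟩, fun ℓ ⟨hℓ, f, hf⟩ => hlower ℓ ⟨hℓ, f, hf.1⟩⟩⟩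

theorem stmt11 {V : Type} [Fintype V] (G : SimpleGraph V) [DecidableRel G.Adj]
    (hT : G.IsTree) (hdiam : ∃ u v : V, 3 ≤ G.dist u v) (hD : 3 ≤ G.maxDegree)
    (h : ℕ) (hh : G.maxDegree ≤ h) :
    sigmaNum G h 1 = 2 * h + G.maxDegree - 1 ∧
    sigmaStar G h 1 = 2 * h + G.maxDegree - 1 :=
  stmt11_general G hT hD h hh
end
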